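/- The maps θ ↦ P̲(f,Z,φ,θ) and θ ↦ P̄(f,Z,φ,θ) are continuous on the interval (0,1] for any nonempty Z ⊆ X and φ ∈ C(X,ℝ). -/

import Mathlib

open Filter Topology Set ENNReal NNReal MeasureTheory

namespace NDSPressure

variable {X : Type*} [MetricSpace X]

/-- `traj f j = f_j ∘ ⋯ ∘ f_1` (with `traj f 0 = id`), the time-`j` map of the
nonautonomous system `f = {f_i}_{i ≥ 1}`. -/
def traj (f : ℕ → X → X) : ℕ → X → X
  | 0 => id
  | n + 1 => f (n + 1) ∘ traj f n

/-- The nonautonomous Birkhoff sum `S_n φ(x) = Σ_{j<n} φ(f_1^j x)`. -/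
noncomputable def birkhoff (f : ℕ → X → X) (φ : X → ℝ) (n : ℕ) (x : X) : ℝ :=
  ∑ j ∈ Finset.range n, φ (traj f j x)

/-- The Bowen ball `B_n(x, δ)` for the nonautonomous system `f`. -/
def bowenBall (f : ℕ → X → X) (n : ℕ) (δ : ℝ) (x : X) : Set X :=
  {y | ∀ j < n, dist (traj f j x) (traj f j y) < δ}

/-- The Bowen metric `d_n(x,y) = max_{0 ≤ j ≤ n-1} d(f_1^j x, f_1^j y)`. -/
noncomputable def dnDist (f : ℕ → X → X) (n : ℕ) (x y : X) : ℝ :=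
  (((Finset.range n).sup fun j => nndist (traj f j x) (traj f j y) : ℝ≥0) : ℝ)

/-- Admissible string/ball lengths for the parameter `θ ∈ [0,1]`:
`N ≤ n` and `n < N/θ + 1` (no upper restriction when `θ = 0`). -/
def admissible (θ : ℝ) (N n : ℕ) : Prop :=
  N ≤ n ∧ (n : ℝ) * θ < N + θ

/-- Weight `exp(-α n + sup_{B_n(x,δ)} S_n φ)` of a Bowen ball, as an extended nonnegative real. -/
noncomputable def ballWeight (f : ℕ → X → X) (φ : X → ℝ) (α δ : ℝ) (p : X × ℕ) : ℝ≥0∞ :=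
  ENNReal.ofReal (Real.exp (-α * p.2 + sSup (birkhoff f φ p.2 '' bowenBall f p.2 δ p.1)))

/-- Weight `exp(-α n + S_n φ(x))` of a Bowen ball using the value at the center. -/
noncomputable def ballWeightC (f : ℕ → X → X) (φ : X → ℝ) (α : ℝ) (p : X × ℕ) : ℝ≥0∞ :=
  ENNReal.ofReal (Real.exp (-α * p.2 + birkhoff f φ p.2 p.1))

/-- The Carathéodory–Pesin set function `M(Z, α, φ, δ, N, θ)` defined via covers of `Z`
by Bowen balls of admissible lengths. -/
noncomputable def MBall (f : ℕ → X → X) (Z : Set X) (α : ℝ) (φ : X → ℝ) (δ : ℝ)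
    (N : ℕ) (θ : ℝ) : ℝ≥0∞ :=
  ⨅ (S : Set (X × ℕ)) (_ : S.Countable) (_ : ∀ p ∈ S, admissible θ N p.2)
    (_ : Z ⊆ ⋃ p ∈ S, bowenBall f p.2 δ p.1),
      ∑' p : S, ballWeight f φ α δ (p : X × ℕ)

/-- Variant of `MBall` where Birkhoff sums are evaluated at the centers of the balls. -/
noncomputable def MBallC (f : ℕ → X → X) (Z : Set X) (α : ℝ) (φ : X → ℝ) (δ : ℝ)
    (N : ℕ) (θ : ℝ) : ℝ≥0∞ :=
  ⨅ (S : Set (X × ℕ)) (_ : S.Countable) (_ : ∀ p ∈ S, admissible θ N p.2)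
    (_ : Z ⊆ ⋃ p ∈ S, bowenBall f p.2 δ p.1),
      ∑' p : S, ballWeightC f φ α (p : X × ℕ)

noncomputable def mLowerBall (f : ℕ → X → X) (Z : Set X) (α : ℝ) (φ : X → ℝ)
    (δ θ : ℝ) : ℝ≥0∞ :=
  liminf (fun N => MBall f Z α φ δ N θ) atTop

noncomputable def mUpperBall (f : ℕ → X → X) (Z : Set X) (α : ℝ) (φ : X → ℝ)
    (δ θ : ℝ) : ℝ≥0∞ :=
  limsup (fun N => MBall f Z α φ δ N θ) atTop

/-- Lower θ-intermediate topological pressure of `φ` on `Z` at scale `δ`. -/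
noncomputable def lowerPBall (f : ℕ → X → X) (Z : Set X) (φ : X → ℝ) (δ θ : ℝ) : ℝ :=
  sInf {α : ℝ | mLowerBall f Z α φ δ θ = 0}

/-- Upper θ-intermediate topological pressure of `φ` on `Z` at scale `δ`. -/
noncomputable def upperPBall (f : ℕ → X → X) (Z : Set X) (φ : X → ℝ) (δ θ : ℝ) : ℝ :=
  sInf {α : ℝ | mUpperBall f Z α φ δ θ = 0}

/-- Center variants of the pressures at scale `δ`. -/
noncomputable def lowerPBallC (f : ℕ → X → X) (Z : Set X) (φ : X → ℝ) (δ θ : ℝ) : ℝ :=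
  sInf {α : ℝ | liminf (fun N => MBallC f Z α φ δ N θ) atTop = 0}

noncomputable def upperPBallC (f : ℕ → X → X) (Z : Set X) (φ : X → ℝ) (δ θ : ℝ) : ℝ :=
  sInf {α : ℝ | limsup (fun N => MBallC f Z α φ δ N θ) atTop = 0}

/-- The lower θ-intermediate topological pressure `P̲(f, Z, φ, θ) = lim_{δ→0} P̲(f,Z,φ,δ,θ)`
(the limit exists; we take the `limsup` along `δ → 0⁺`, which equals it). -/
noncomputable def lowerP (f : ℕ → X → X) (Z : Set X) (φ : X → ℝ) (θ : ℝ) : ℝ :=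
  limsup (fun δ => lowerPBall f Z φ δ θ) (𝓝[>] (0 : ℝ))

/-- The upper θ-intermediate topological pressure `P̄(f, Z, φ, θ)`. -/
noncomputable def upperP (f : ℕ → X → X) (Z : Set X) (φ : X → ℝ) (θ : ℝ) : ℝ :=
  limsup (fun δ => upperPBall f Z φ δ θ) (𝓝[>] (0 : ℝ))

/-! ### String (open cover) version -/

/-- For a string `L = (U_0, …, U_{m-1})` of sets, the set
`X(L) = {x : f_1^j x ∈ U_j for all j < m}`. -/
def stringSet (f : ℕ → X → X) (L : List (Set X)) : Set X :=
  {x | ∀ j < L.length, traj f j x ∈ L.getD j ∅}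

/-- Weight of a string. -/
noncomputable def strWeight (f : ℕ → X → X) (φ : X → ℝ) (α : ℝ) (L : List (Set X)) : ℝ≥0∞ :=
  ENNReal.ofReal (Real.exp (-α * L.length + sSup (birkhoff f φ L.length '' stringSet f L)))

/-- The Carathéodory–Pesin set function defined via covers of `Z` by string sets coming
from the cover `𝒰`, with admissible string lengths. -/
noncomputable def MStr (f : ℕ → X → X) (Z : Set X) (α : ℝ) (φ : X → ℝ)
    (𝒰 : Finset (Set X)) (N : ℕ) (θ : ℝ) : ℝ≥0∞ :=
  ⨅ (G : Set (List (Set X))) (_ : G.Countable)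
    (_ : ∀ L ∈ G, (∀ U ∈ L, U ∈ 𝒰) ∧ admissible θ N L.length)
    (_ : Z ⊆ ⋃ L ∈ G, stringSet f L),
      ∑' L : G, strWeight f φ α (L : List (Set X))

/-- Lower θ-intermediate pressure relative to the open cover `𝒰`. -/
noncomputable def lowerPStr (f : ℕ → X → X) (Z : Set X) (φ : X → ℝ)
    (𝒰 : Finset (Set X)) (θ : ℝ) : ℝ :=
  sInf {α : ℝ | liminf (fun N => MStr f Z α φ 𝒰 N θ) atTop = 0}

/-- Upper θ-intermediate pressure relative to the open cover `𝒰`. -/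
noncomputable def upperPStr (f : ℕ → X → X) (Z : Set X) (φ : X → ℝ)
    (𝒰 : Finset (Set X)) (θ : ℝ) : ℝ :=
  sInf {α : ℝ | limsup (fun N => MStr f Z α φ 𝒰 N θ) atTop = 0}

/-- `𝒰` is a finite open cover of `X`. -/
def IsFinOpenCover (𝒰 : Finset (Set X)) : Prop :=
  (∀ U ∈ 𝒰, IsOpen U) ∧ ⋃₀ (𝒰 : Set (Set X)) = Set.univ

/-- The mesh `|𝒰|` of a cover: the maximal diameter of its elements. -/
noncomputable def coverDiam (𝒰 : Finset (Set X)) : ℝ :=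
  sSup (Metric.diam '' (𝒰 : Set (Set X)))

/-- The filter of finite open covers of vanishing mesh (`|𝒰| → 0`). -/
noncomputable def coverFilter (X : Type*) [MetricSpace X] :
    Filter {𝒰 : Finset (Set X) // IsFinOpenCover 𝒰} :=
  Filter.comap (fun 𝒰 => coverDiam 𝒰.1) (𝓝 (0 : ℝ))

/-- The open-cover definition of the lower θ-intermediate pressure:
`lim_{|𝒰|→0} P̲(f,Z,φ,𝒰,θ)` (as a `limsup` along the cover filter). -/
noncomputable def lowerPStrFull (f : ℕ → X → X) (Z : Set X) (φ : X → ℝ) (θ : ℝ) : ℝ :=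
  limsup (fun 𝒰 : {𝒰 : Finset (Set X) // IsFinOpenCover 𝒰} => lowerPStr f Z φ 𝒰.1 θ)
    (coverFilter X)

/-- The open-cover definition of the upper θ-intermediate pressure. -/
noncomputable def upperPStrFull (f : ℕ → X → X) (Z : Set X) (φ : X → ℝ) (θ : ℝ) : ℝ :=
  limsup (fun 𝒰 : {𝒰 : Finset (Set X) // IsFinOpenCover 𝒰} => upperPStr f Z φ 𝒰.1 θ)
    (coverFilter X)

/-! ### Measure-theoretic version -/

/-- `M_μ(f, α, φ, ε, N, θ)`: infimum over finite μ-covers by Bowen balls of admissible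
lengths of the total weight. -/
noncomputable def MMeas [MeasurableSpace X] (f : ℕ → X → X) (μ : Measure X) (α : ℝ)
    (φ : X → ℝ) (ε : ℝ) (N : ℕ) (θ : ℝ) : ℝ≥0∞ :=
  ⨅ (S : Finset (X × ℕ)) (_ : ∀ p ∈ S, admissible θ N p.2)
    (_ : μ (⋃ p ∈ S, bowenBall f p.2 ε p.1) = 1),
      ∑ p ∈ S, ballWeight f φ α ε p

noncomputable def lowerPMeasEps [MeasurableSpace X] (f : ℕ → X → X) (μ : Measure X)
    (φ : X → ℝ) (ε θ : ℝ) : ℝ :=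
  sInf {α : ℝ | liminf (fun N => MMeas f μ α φ ε N θ) atTop = 0}

noncomputable def upperPMeasEps [MeasurableSpace X] (f : ℕ → X → X) (μ : Measure X)
    (φ : X → ℝ) (ε θ : ℝ) : ℝ :=
  sInf {α : ℝ | limsup (fun N => MMeas f μ α φ ε N θ) atTop = 0}

/-- The lower θ-intermediate measure-theoretic pressure `P̲_μ(f, φ, θ)`. -/
noncomputable def lowerPMeas [MeasurableSpace X] (f : ℕ → X → X) (μ : Measure X)
    (φ : X → ℝ) (θ : ℝ) : ℝ :=
  limsup (fun ε => lowerPMeasEps f μ φ ε θ) (𝓝[>] (0 : ℝ))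

/-- The upper θ-intermediate measure-theoretic pressure `P̄_μ(f, φ, θ)`. -/
noncomputable def upperPMeas [MeasurableSpace X] (f : ℕ → X → X) (μ : Measure X)
    (φ : X → ℝ) (θ : ℝ) : ℝ :=
  limsup (fun ε => upperPMeasEps f μ φ ε θ) (𝓝[>] (0 : ℝ))

/-! ### Power system -/

/-- `compFrom f k n = f_{k+n} ∘ ⋯ ∘ f_{k+1}`. -/
def compFrom (f : ℕ → X → X) (k : ℕ) : ℕ → X → X
  | 0 => id
  | n + 1 => f (k + n + 1) ∘ compFrom f k n

/-- The `m`-th power system `f^m = {f_{(i-1)m+1}^{im}}_{i ≥ 1}`. -/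
def powerSeq (f : ℕ → X → X) (m : ℕ) : ℕ → X → X :=
  fun i => compFrom f ((i - 1) * m) m

/-!
Fix `0 < θ ≤ θ' ≤ 1`, a scale `δ`, and `η` bounding the oscillation of `φ` on pairs at distance
`< δ`. Truncating every ball of an admissible `θ`-cover to length `⌈N/θ'⌉` gives an admissible
`θ'`-cover; comparing Birkhoff sums along the truncation shows that its weight at exponent
`(θ'/θ)(α + ‖φ‖) - ‖φ‖ + η` is at most `exp (α + ‖φ‖)` times the weight of the original cover at
exponent `α`. Hence, at every scale, `P(θ) ≤ P(θ') ≤ (θ'/θ)(P(θ) + ‖φ‖) - ‖φ‖ + η`, and by uniform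
continuity of `φ` these bounds pass to the limit `δ → 0` with `η = 0`. A function `g` on `(0, 1]`
with `g θ ≤ g θ' ≤ (θ'/θ)(g θ + C) - C` is squeezed, hence continuous.
-/

section Squeeze

theorem continuousOn_of_monotoneOn_of_le_div_mul {s : Set ℝ} (hs : s ⊆ Ioi 0) {g : ℝ → ℝ}
    (hmono : MonotoneOn g s) (hle : ∀ θ ∈ s, ∀ θ' ∈ s, θ ≤ θ' → g θ' ≤ θ' / θ * g θ) :
    ContinuousOn g s := by
  have hpos : ∀ x ∈ s, 0 < x := fun x hx => mem_Ioi.1 (hs hx)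
  intro θ hθ
  have hθ0 : θ ≠ 0 := (hpos θ hθ).ne'
  have hlin : Tendsto (fun θ' => θ' / θ * g θ) (𝓝[s] θ) (𝓝 (g θ)) := by
    have hcont : Continuous fun θ' : ℝ => θ' / θ * g θ := by fun_prop
    simpa [div_self hθ0] using (hcont.tendsto θ).mono_left nhdsWithin_le_nhds
  have hlo := (tendsto_const_nhds (x := g θ)).min hlin
  have hhi := (tendsto_const_nhds (x := g θ)).max hlin
  rw [min_self] at hlo
  rw [max_self] at hhi
  refine tendsto_of_tendsto_of_tendsto_of_le_of_le' hlo hhi ?_ ?_ <;>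
    filter_upwards [self_mem_nhdsWithin] with θ' hθ' <;>
    rcases le_total θ θ' with h | h
  · exact min_le_of_left_le (hmono hθ hθ' h)
  · refine min_le_of_right_le ?_
    calc θ' / θ * g θ ≤ θ' / θ * (θ / θ' * g θ') := by
          gcongr
          · exact div_nonneg (hpos θ' hθ').le (hpos θ hθ).le
          · exact hle θ' hθ' θ hθ h
      _ = g θ' := by field_simp [(hpos θ' hθ').ne']
  · exact le_max_of_le_right (hle θ hθ θ' hθ' h)
  · exact le_max_of_le_left (hmono hθ' hθ h)

/- The pressures are `sInf`s of possibly empty sets and `limsup`s of possibly unbounded functions,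
both `0` by convention; the next two lemmas also cover those junk cases. -/

theorem sInf_le_sInf_and_sInf_le_mul {S S' : Set ℝ} {r C η : ℝ} (hr : 1 ≤ r) (hC : 0 ≤ C)
    (hη : 0 ≤ η) (hS : ∀ α ∈ S, -C ≤ α) (hsub : S' ⊆ S)
    (hmap : ∀ α ∈ S, r * (α + C) - C + η ∈ S') :
    sInf S ≤ sInf S' ∧ sInf S' ≤ r * (sInf S + C) - C + η := by
  have hbdd : BddBelow S := ⟨-C, hS⟩
  rcases S.eq_empty_or_nonempty with rfl | ⟨α₀, hα₀⟩
  · obtain rfl := subset_empty_iff.1 hsub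
    rw [Real.sInf_empty]
    constructor <;> nlinarith
  refine ⟨csInf_le_csInf hbdd ⟨_, hmap α₀ hα₀⟩ hsub, ?_⟩
  have hr0 : 0 < r := by linarith
  have hinv : (sInf S' + C - η) / r - C ≤ sInf S := le_csInf ⟨α₀, hα₀⟩ fun α hα => by
    have := csInf_le (hbdd.mono hsub) (hmap α hα)
    rw [sub_le_iff_le_add, div_le_iff₀ hr0]
    linarith
  rw [sub_le_iff_le_add, div_le_iff₀ hr0] at hinv
  linarith

theorem limsup_le_limsup_and_limsup_le_mul {ι : Type*} {l : Filter ι} [l.NeBot] {u v : ι → ℝ}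
    {r C : ℝ} (hr : 1 ≤ r) (hC : 0 ≤ C) (hu : ∀ᶠ x in l, -C ≤ u x) (huv : ∀ᶠ x in l, u x ≤ v x)
    (hvu : ∀ η > 0, ∀ᶠ x in l, v x ≤ r * (u x + C) - C + η) :
    limsup u l ≤ limsup v l ∧ limsup v l ≤ r * (limsup u l + C) - C := by
  have hv : ∀ᶠ x in l, -C ≤ v x := (hu.and huv).mono fun x h => h.1.trans h.2
  by_cases hbu : IsBoundedUnder (· ≤ ·) l u
  swap
  · have hbv : ¬IsBoundedUnder (· ≤ ·) l v := fun h => hbu (h.mono_le huv)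
    rw [Real.limsup_of_not_isBoundedUnder hbu, Real.limsup_of_not_isBoundedUnder hbv]
    constructor <;> nlinarith
  obtain ⟨b, hb⟩ := hbu
  have hbv : IsBoundedUnder (· ≤ ·) l v := ⟨r * (b + C) - C + 1, eventually_map.2 <| by
    filter_upwards [eventually_map.1 hb, hvu 1 one_pos] with x hxb hxv
    nlinarith⟩
  refine ⟨limsup_le_limsup huv (isCoboundedUnder_le_of_eventually_le l hu) hbv, ?_⟩
  refine le_of_forall_pos_le_add fun ε hε => limsup_le_of_le
    (isCoboundedUnder_le_of_eventually_le l hv) ?_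
  have hε' : 0 < ε / (2 * r) := by positivity
  filter_upwards [eventually_lt_of_limsup_lt (lt_add_of_pos_right _ hε') ⟨b, hb⟩,
    hvu (ε / 2) (half_pos hε)] with x hxu hxv
  calc v x ≤ r * (u x + C) - C + ε / 2 := hxv
    _ ≤ r * (limsup u l + ε / (2 * r) + C) - C + ε / 2 := by gcongr
    _ = r * (limsup u l + C) - C + ε := by field_simp; ring

theorem continuousOn_limsup_sInf {ι : Type*} {l : Filter ι} [l.NeBot] {s : Set ℝ}
    (hs : s ⊆ Ioi 0) {T : ι → ℝ → Set ℝ} {C : ℝ} (hC : 0 ≤ C)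
    (hlow : ∀ δ θ, ∀ α ∈ T δ θ, -C ≤ α)
    (hanti : ∀ δ, ∀ θ ∈ s, ∀ θ' ∈ s, θ ≤ θ' → T δ θ' ⊆ T δ θ)
    (hscale : ∀ η > 0, ∀ᶠ δ in l, ∀ θ ∈ s, ∀ θ' ∈ s, θ ≤ θ' →
      ∀ α ∈ T δ θ, θ' / θ * (α + C) - C + η ∈ T δ θ') :
    ContinuousOn (fun θ => limsup (fun δ => sInf (T δ θ)) l) s := by
  have hbounds : ∀ θ ∈ s, ∀ θ' ∈ s, θ ≤ θ' →
      limsup (fun δ => sInf (T δ θ)) l ≤ limsup (fun δ => sInf (T δ θ')) l ∧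
      limsup (fun δ => sInf (T δ θ')) l ≤ θ' / θ * (limsup (fun δ => sInf (T δ θ)) l + C) - C := by
    intro θ hθ θ' hθ' hle
    have hr : 1 ≤ θ' / θ := (one_le_div (hs hθ)).2 hle
    have hstep : ∀ η > 0, ∀ᶠ δ in l, sInf (T δ θ) ≤ sInf (T δ θ') ∧
        sInf (T δ θ') ≤ θ' / θ * (sInf (T δ θ) + C) - C + η := fun η hη =>
      (hscale η hη).mono fun δ hδ => sInf_le_sInf_and_sInf_le_mul hr hC hη.le (hlow δ θ)
        (hanti δ θ hθ θ' hθ' hle) (hδ θ hθ θ' hθ' hle)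
    exact limsup_le_limsup_and_limsup_le_mul hr hC
      (Eventually.of_forall fun δ => Real.le_sInf (hlow δ θ) (by linarith))
      ((hstep 1 one_pos).mono fun _ h => h.1) fun η hη => (hstep η hη).mono fun _ h => h.2
  have hshift := continuousOn_of_monotoneOn_of_le_div_mul hs
    (g := fun θ => limsup (fun δ => sInf (T δ θ)) l + C)
    (fun θ hθ θ' hθ' hle => by simpa using (hbounds θ hθ θ' hθ' hle).1)
    (fun θ hθ θ' hθ' hle => by linarith [(hbounds θ hθ θ' hθ' hle).2])
  exact (hshift.sub (continuousOn_const (c := C))).congr fun θ _ => by simp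

end Squeeze

theorem admissible_of_le {θ θ' : ℝ} {N n : ℕ} (hθ : 0 < θ) (hθθ' : θ ≤ θ')
    (h : admissible θ' N n) : admissible θ N n := by
  refine ⟨h.1, ?_⟩
  rcases Nat.eq_zero_or_pos n with rfl | hn
  · simp only [Nat.cast_zero, zero_mul]
    positivity
  · have hn1 : (1 : ℝ) ≤ n := by exact_mod_cast hn
    nlinarith [h.2]

theorem admissible_min_ceil {θ' : ℝ} {N n : ℕ} (hθ' : 0 < θ') (hθ'1 : θ' ≤ 1) (hN : N ≤ n) :
    admissible θ' N (min n ⌈(N : ℝ) / θ'⌉₊) := by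
  have hceil : (⌈(N : ℝ) / θ'⌉₊ : ℝ) < N / θ' + 1 := Nat.ceil_lt_add_one (by positivity)
  refine ⟨le_min hN ?_, ?_⟩
  · exact_mod_cast (le_div_self (Nat.cast_nonneg N) hθ' hθ'1).trans (Nat.le_ceil _)
  · have hmin : ((min n ⌈(N : ℝ) / θ'⌉₊ : ℕ) : ℝ) ≤ ⌈(N : ℝ) / θ'⌉₊ := by
      exact_mod_cast min_le_right _ _
    calc ((min n ⌈(N : ℝ) / θ'⌉₊ : ℕ) : ℝ) * θ' < (N / θ' + 1) * θ' := by gcongr; linarith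
      _ = N + θ' := by field_simp

/-- Truncating an admissible length `n` for `θ` to `m = min n ⌈N/θ'⌉` multiplies the weight of a
ball by at most `exp (α + C)` when the exponent `α` is raised to `α'`. -/
theorem truncation_exponent_le {θ θ' α α' C η : ℝ} {N n m : ℕ} (hθ : 0 < θ) (hθθ' : θ ≤ θ')
    (hα : -C ≤ α) (hα' : θ' / θ * (α + C) - C + η ≤ α') (hnθ : (n : ℝ) * θ < N + θ)
    (hm : m = n ∨ (N : ℝ) / θ' ≤ m) :
    α * n - α' * m + (n - m) * C + m * η ≤ α + C := by
  have hθ' : 0 < θ' := hθ.trans_le hθθ'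
  have hr : α + C ≤ θ' / θ * (α + C) :=
    le_mul_of_one_le_left (by linarith) ((one_le_div hθ).2 hθθ')
  rcases hm with rfl | hm
  · nlinarith [Nat.cast_nonneg (α := ℝ) m]
  · have hn : (n : ℝ) ≤ N / θ + 1 := by
      rw [div_add_one hθ.ne', le_div_iff₀ hθ]
      linarith
    have hM : θ' / θ * (α + C) * (N / θ') ≤ (α' + C - η) * m :=
      mul_le_mul (by linarith) hm (by positivity) (by linarith)
    have hN : θ' / θ * (α + C) * (N / θ') = (α + C) * (N / θ) := by
      field_simp
    nlinarith [mul_le_mul_of_nonneg_left hn (by linarith : (0 : ℝ) ≤ α + C)]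

section BowenBall

variable (f : ℕ → X → X)

theorem self_mem_bowenBall {δ : ℝ} (hδ : 0 < δ) (n : ℕ) (x : X) : x ∈ bowenBall f n δ x :=
  fun j _ => by simpa using hδ

theorem bowenBall_subset_of_le {m n : ℕ} (h : m ≤ n) (δ : ℝ) (x : X) :
    bowenBall f n δ x ⊆ bowenBall f m δ x :=
  fun _ hy j hj => hy j (hj.trans_le h)

theorem birkhoff_le_of_mem_bowenBall (φ : X → ℝ) {δ η : ℝ} {m : ℕ} {x y : X}
    (hmod : ∀ a b : X, dist a b < δ → |φ a - φ b| ≤ η) (hy : y ∈ bowenBall f m δ x) :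
    birkhoff f φ m y ≤ birkhoff f φ m x + m * η := by
  have hsum : ∑ j ∈ Finset.range m, (φ (traj f j y) - φ (traj f j x)) ≤
      ∑ _j ∈ Finset.range m, η :=
    Finset.sum_le_sum fun j hj =>
      le_of_abs_le (hmod _ _ (dist_comm (traj f j x) _ ▸ hy j (Finset.mem_range.1 hj)))
  simp only [Finset.sum_sub_distrib, Finset.sum_const, Finset.card_range, nsmul_eq_mul] at hsum
  simp only [birkhoff]
  linarith

variable {f} {Z : Set X} {α : ℝ} {δ : ℝ} {N : ℕ} {θ : ℝ}

theorem MBall_le_tsum {φ : X → ℝ} {S : Set (X × ℕ)} (hS : S.Countable)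
    (hadm : ∀ p ∈ S, admissible θ N p.2)
    (hcov : Z ⊆ ⋃ p ∈ S, bowenBall f p.2 δ p.1) :
    MBall f Z α φ δ N θ ≤ ∑' p : S, ballWeight f φ α δ p :=
  iInf_le_of_le S (iInf_le_of_le hS (iInf_le_of_le hadm (iInf_le _ hcov)))

theorem MBall_mono_theta (φ : X → ℝ) {θ' : ℝ} (hθ : 0 < θ) (hθθ' : θ ≤ θ') :
    MBall f Z α φ δ N θ ≤ MBall f Z α φ δ N θ' :=
  le_iInf fun _ => le_iInf fun hS => le_iInf fun hadm => le_iInf fun hcov =>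
    MBall_le_tsum hS (fun p hp => admissible_of_le hθ hθθ' (hadm p hp)) hcov

theorem mLowerBall_mono_theta (φ : X → ℝ) {θ' : ℝ} (hθ : 0 < θ) (hθθ' : θ ≤ θ') :
    mLowerBall f Z α φ δ θ ≤ mLowerBall f Z α φ δ θ' :=
  liminf_le_liminf (Eventually.of_forall fun _ => MBall_mono_theta φ hθ hθθ')

theorem mUpperBall_mono_theta (φ : X → ℝ) {θ' : ℝ} (hθ : 0 < θ) (hθθ' : θ ≤ θ') :
    mUpperBall f Z α φ δ θ ≤ mUpperBall f Z α φ δ θ' :=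
  limsup_le_limsup (Eventually.of_forall fun _ => MBall_mono_theta φ hθ hθθ')

end BowenBall

section Pressure

variable [CompactSpace X] (f : ℕ → X → X) (φ : C(X, ℝ))

theorem abs_apply_le_norm (x : X) : |φ x| ≤ ‖φ‖ := φ.norm_coe_le_norm x

theorem abs_birkhoff_le (n : ℕ) (x : X) : |birkhoff f φ n x| ≤ n * ‖φ‖ :=
  calc |birkhoff f φ n x| ≤ ∑ j ∈ Finset.range n, |φ (traj f j x)| :=
        Finset.abs_sum_le_sum_abs _ _
    _ ≤ ∑ _j ∈ Finset.range n, ‖φ‖ :=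
        Finset.sum_le_sum fun _ _ => abs_apply_le_norm φ _
    _ = n * ‖φ‖ := by simp

theorem birkhoff_le_birkhoff_add {m n : ℕ} (h : m ≤ n) (x : X) :
    birkhoff f φ m x ≤ birkhoff f φ n x + (n - m) * ‖φ‖ := by
  have hsplit := Finset.sum_range_add_sum_Ico (fun j => φ (traj f j x)) h
  have htail := Finset.card_nsmul_le_sum (Finset.Ico m n) (fun j => φ (traj f j x)) (-‖φ‖)
    fun j _ => neg_le_of_abs_le (abs_apply_le_norm φ _)
  simp only [Nat.card_Ico, nsmul_eq_mul, Nat.cast_sub h] at htail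
  simp only [birkhoff]
  linarith

theorem bddAbove_birkhoff_image (n : ℕ) (B : Set X) : BddAbove (birkhoff f φ n '' B) :=
  ⟨n * ‖φ‖, by rintro _ ⟨y, -, rfl⟩; exact le_of_abs_le (abs_birkhoff_le f φ n y)⟩

theorem neg_le_sSup_birkhoff_image (n : ℕ) (B : Set X) :
    -(n * ‖φ‖) ≤ sSup (birkhoff f φ n '' B) := by
  rcases B.eq_empty_or_nonempty with rfl | ⟨y, hy⟩
  · simp only [image_empty, Real.sSup_empty, neg_nonpos]
    positivity
  · exact (neg_le_of_abs_le (abs_birkhoff_le f φ n y)).trans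
      (le_csSup (bddAbove_birkhoff_image f φ n B) (mem_image_of_mem _ hy))

theorem sSup_birkhoff_bowenBall_le {δ η : ℝ} (hδ : 0 < δ)
    (hmod : ∀ a b : X, dist a b < δ → |φ a - φ b| ≤ η) {m n : ℕ} (hmn : m ≤ n) (x : X) :
    sSup (birkhoff f φ m '' bowenBall f m δ x) ≤
      sSup (birkhoff f φ n '' bowenBall f n δ x) + (n - m) * ‖φ‖ + m * η := by
  refine csSup_le ((Set.nonempty_of_mem (self_mem_bowenBall f hδ m x)).image _) ?_
  rintro _ ⟨y, hy, rfl⟩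
  have hcenter : birkhoff f φ n x ≤ sSup (birkhoff f φ n '' bowenBall f n δ x) :=
    le_csSup (bddAbove_birkhoff_image f φ n _) (mem_image_of_mem _ (self_mem_bowenBall f hδ n x))
  linarith [birkhoff_le_of_mem_bowenBall f φ hmod hy, birkhoff_le_birkhoff_add f φ hmn x]

theorem ballWeight_le_mul_ballWeight {δ η : ℝ} (hδ : 0 < δ)
    (hmod : ∀ a b : X, dist a b < δ → |φ a - φ b| ≤ η) {m n : ℕ} (hmn : m ≤ n) (α α' : ℝ)
    (x : X) :
    ballWeight f φ α' δ (x, m) ≤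
      ENNReal.ofReal (Real.exp (α * n - α' * m + (n - m) * ‖φ‖ + m * η)) *
        ballWeight f φ α δ (x, n) := by
  rw [ballWeight, ballWeight, ← ENNReal.ofReal_mul (Real.exp_nonneg _), ← Real.exp_add]
  refine ENNReal.ofReal_le_ofReal (Real.exp_le_exp.2 ?_)
  dsimp only
  linarith [sSup_birkhoff_bowenBall_le f φ hδ hmod hmn x]

variable {f} {Z : Set X} {α : ℝ} {δ : ℝ} {N : ℕ} {θ : ℝ}

theorem ofReal_exp_le_MBall (hZ : Z.Nonempty) (hα : α ≤ -‖φ‖) :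
    ENNReal.ofReal (Real.exp ((-α - ‖φ‖) * N)) ≤ MBall f Z α φ δ N θ := by
  refine le_iInf fun S => le_iInf fun _ => le_iInf fun hadm => le_iInf fun hcov => ?_
  obtain ⟨p, hpS, -⟩ := mem_iUnion₂.1 (hcov hZ.some_mem)
  refine le_trans ?_ (ENNReal.le_tsum (⟨p, hpS⟩ : S))
  have hN : (N : ℝ) ≤ p.2 := by exact_mod_cast (hadm p hpS).1
  rw [ballWeight]
  gcongr
  nlinarith [neg_le_sSup_birkhoff_image f φ p.2 (bowenBall f p.2 δ p.1)]

theorem tendsto_MBall_top (hZ : Z.Nonempty) (hα : α < -‖φ‖) :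
    Tendsto (fun N => MBall f Z α φ δ N θ) atTop (𝓝 ⊤) :=
  tendsto_nhds_top_mono
    (ENNReal.tendsto_ofReal_atTop.comp (Real.tendsto_exp_atTop.comp
      (tendsto_natCast_atTop_atTop.const_mul_atTop (by linarith))))
    (Eventually.of_forall fun _ => ofReal_exp_le_MBall φ hZ hα.le)

theorem MBall_le_mul_MBall {θ' α' η : ℝ} (hδ : 0 < δ)
    (hmod : ∀ a b : X, dist a b < δ → |φ a - φ b| ≤ η) (hθ : 0 < θ) (hθθ' : θ ≤ θ')
    (hθ'1 : θ' ≤ 1) (hα : -‖φ‖ ≤ α) (hα' : θ' / θ * (α + ‖φ‖) - ‖φ‖ + η ≤ α') :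
    MBall f Z α' φ δ N θ' ≤ ENNReal.ofReal (Real.exp (α + ‖φ‖)) * MBall f Z α φ δ N θ := by
  set K := ENNReal.ofReal (Real.exp (α + ‖φ‖))
  have hK0 : K ≠ 0 := by simp [K, Real.exp_pos]
  rw [← ENNReal.div_le_iff' hK0 ENNReal.ofReal_ne_top]
  refine le_iInf fun S => le_iInf fun hS => le_iInf fun hadm => le_iInf fun hcov => ?_
  rw [ENNReal.div_le_iff' hK0 ENNReal.ofReal_ne_top]
  set t : X × ℕ → X × ℕ := fun p => (p.1, min p.2 ⌈(N : ℝ) / θ'⌉₊)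
  have hadm' : ∀ q ∈ t '' S, admissible θ' N q.2 := by
    rintro _ ⟨p, hp, rfl⟩
    exact admissible_min_ceil (hθ.trans_le hθθ') hθ'1 (hadm p hp).1
  have hcov' : Z ⊆ ⋃ q ∈ t '' S, bowenBall f q.2 δ q.1 :=
    hcov.trans <| iUnion₂_subset fun p hp =>
      (bowenBall_subset_of_le f (min_le_left _ _) δ p.1).trans
        (subset_biUnion_of_mem (u := fun q : X × ℕ => bowenBall f q.2 δ q.1)
          (mem_image_of_mem t hp))
  have hpoint : ∀ p ∈ S, ballWeight f φ α' δ (t p) ≤ K * ballWeight f φ α δ p := fun p hp =>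
    (ballWeight_le_mul_ballWeight f φ hδ hmod (min_le_left _ _) α α' p.1).trans <|
      mul_le_mul_left (ENNReal.ofReal_le_ofReal <| Real.exp_le_exp.2 <|
        truncation_exponent_le hθ hθθ' hα hα' (hadm p hp).2 <|
          (min_choice _ _).imp id fun h => by rw [h]; exact Nat.le_ceil _) _
  calc MBall f Z α' φ δ N θ' ≤ ∑' q : t '' S, ballWeight f φ α' δ q :=
        MBall_le_tsum (hS.image t) hadm' hcov'
    _ ≤ ∑' p : S, ballWeight f φ α' δ (t p) :=
        ENNReal.tsum_le_tsum_comp_of_surjective imageFactorization_surjective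
          (fun q : t '' S => ballWeight f φ α' δ q)
    _ ≤ ∑' p : S, K * ballWeight f φ α δ p := ENNReal.tsum_le_tsum fun p => hpoint p p.2
    _ = K * ∑' p : S, ballWeight f φ α δ p := ENNReal.tsum_mul_left

theorem eventually_abs_sub_le_of_dist_lt {η : ℝ} (hη : 0 < η) :
    ∀ᶠ δ in 𝓝[>] (0 : ℝ), 0 < δ ∧ ∀ a b : X, dist a b < δ → |φ a - φ b| ≤ η := by
  obtain ⟨ε, hε, hφ⟩ := Metric.uniformContinuous_iff.1
    (CompactSpace.uniformContinuous_of_continuous φ.continuous) η hη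
  filter_upwards [Ioo_mem_nhdsGT hε] with δ hδ
  exact ⟨hδ.1, fun a b hab => (Real.dist_eq (φ a) (φ b) ▸ hφ (hab.trans hδ.2)).le⟩

theorem neg_norm_le_of_mLowerBall_eq_zero (hZ : Z.Nonempty) (h : mLowerBall f Z α φ δ θ = 0) :
    -‖φ‖ ≤ α := by
  by_contra! hα
  rw [mLowerBall, (tendsto_MBall_top φ hZ hα).liminf_eq] at h
  exact ENNReal.top_ne_zero h

theorem neg_norm_le_of_mUpperBall_eq_zero (hZ : Z.Nonempty) (h : mUpperBall f Z α φ δ θ = 0) :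
    -‖φ‖ ≤ α := by
  by_contra! hα
  rw [mUpperBall, (tendsto_MBall_top φ hZ hα).limsup_eq] at h
  exact ENNReal.top_ne_zero h

theorem mLowerBall_le_mul_mLowerBall {θ' α' η : ℝ} (hδ : 0 < δ)
    (hmod : ∀ a b : X, dist a b < δ → |φ a - φ b| ≤ η) (hθ : 0 < θ) (hθθ' : θ ≤ θ')
    (hθ'1 : θ' ≤ 1) (hα : -‖φ‖ ≤ α) (hα' : θ' / θ * (α + ‖φ‖) - ‖φ‖ + η ≤ α') :
    mLowerBall f Z α' φ δ θ' ≤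
      ENNReal.ofReal (Real.exp (α + ‖φ‖)) * mLowerBall f Z α φ δ θ := by
  rw [mLowerBall, mLowerBall, ← ENNReal.liminf_const_mul_of_ne_zero_of_ne_top
    (by simp [Real.exp_pos]) ENNReal.ofReal_ne_top]
  exact liminf_le_liminf (Eventually.of_forall fun _ =>
    MBall_le_mul_MBall φ hδ hmod hθ hθθ' hθ'1 hα hα')

theorem mUpperBall_le_mul_mUpperBall {θ' α' η : ℝ} (hδ : 0 < δ)
    (hmod : ∀ a b : X, dist a b < δ → |φ a - φ b| ≤ η) (hθ : 0 < θ) (hθθ' : θ ≤ θ')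
    (hθ'1 : θ' ≤ 1) (hα : -‖φ‖ ≤ α) (hα' : θ' / θ * (α + ‖φ‖) - ‖φ‖ + η ≤ α') :
    mUpperBall f Z α' φ δ θ' ≤
      ENNReal.ofReal (Real.exp (α + ‖φ‖)) * mUpperBall f Z α φ δ θ := by
  rw [mUpperBall, mUpperBall, ← ENNReal.limsup_const_mul_of_ne_top ENNReal.ofReal_ne_top]
  exact limsup_le_limsup (Eventually.of_forall fun _ =>
    MBall_le_mul_MBall φ hδ hmod hθ hθθ' hθ'1 hα hα')

theorem continuousOn_lowerP (hZ : Z.Nonempty) :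
    ContinuousOn (fun θ => lowerP f Z φ θ) (Ioc 0 1) :=
  continuousOn_limsup_sInf (T := fun δ θ => {α | mLowerBall f Z α φ δ θ = 0})
    (fun _ hθ => hθ.1) (norm_nonneg φ)
    (fun _ _ _ hα => neg_norm_le_of_mLowerBall_eq_zero φ hZ hα)
    (fun _ _ hθ _ _ hle _ hα => le_zero_iff.1 ((mLowerBall_mono_theta φ hθ.1 hle).trans_eq hα))
    fun _ hη => (eventually_abs_sub_le_of_dist_lt φ hη).mono
      fun _ ⟨hδ, hmod⟩ _ hθ _ hθ' hle _ hα => le_zero_iff.1 <|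
        (mLowerBall_le_mul_mLowerBall φ hδ hmod hθ.1 hle hθ'.2
          (neg_norm_le_of_mLowerBall_eq_zero φ hZ hα) le_rfl).trans_eq
          (mul_eq_zero_of_right _ hα)

theorem continuousOn_upperP (hZ : Z.Nonempty) :
    ContinuousOn (fun θ => upperP f Z φ θ) (Ioc 0 1) :=
  continuousOn_limsup_sInf (T := fun δ θ => {α | mUpperBall f Z α φ δ θ = 0})
    (fun _ hθ => hθ.1) (norm_nonneg φ)
    (fun _ _ _ hα => neg_norm_le_of_mUpperBall_eq_zero φ hZ hα)
    (fun _ _ hθ _ _ hle _ hα => le_zero_iff.1 ((mUpperBall_mono_theta φ hθ.1 hle).trans_eq hα))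
    fun _ hη => (eventually_abs_sub_le_of_dist_lt φ hη).mono
      fun _ ⟨hδ, hmod⟩ _ hθ _ hθ' hle _ hα => le_zero_iff.1 <|
        (mUpperBall_le_mul_mUpperBall φ hδ hmod hθ.1 hle hθ'.2
          (neg_norm_le_of_mUpperBall_eq_zero φ hZ hα) le_rfl).trans_eq
          (mul_eq_zero_of_right _ hα)

end Pressure

theorem pressure_continuousOn_Ioc_general {X : Type*} [MetricSpace X] [CompactSpace X]
    (f : ℕ → X → X)
    (Z : Set X) (hZ : Z.Nonempty) (φ : C(X, ℝ)) :
    ContinuousOn (fun θ => lowerP f Z (⇑φ) θ) (Set.Ioc (0 : ℝ) 1) ∧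
    ContinuousOn (fun θ => upperP f Z (⇑φ) θ) (Set.Ioc (0 : ℝ) 1) :=
  ⟨continuousOn_lowerP φ hZ, continuousOn_upperP φ hZ⟩

/-- the maps `θ ↦ P̲(f,Z,φ,θ)` and `θ ↦ P̄(f,Z,φ,θ)` are continuous on `(0,1]`. -/
theorem pressure_continuousOn_Ioc {X : Type*} [MetricSpace X] [CompactSpace X]
    (f : ℕ → X → X) (hf : ∀ i, Continuous (f i))
    (Z : Set X) (hZ : Z.Nonempty) (φ : C(X, ℝ)) :
    ContinuousOn (fun θ => lowerP f Z (⇑φ) θ) (Set.Ioc (0 : ℝ) 1) ∧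
    ContinuousOn (fun θ => upperP f Z (⇑φ) θ) (Set.Ioc (0 : ℝ) 1) :=
  pressure_continuousOn_Ioc_general f Z hZ φ

end NDSPressure
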